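/- Define P : 𝔤 → C^∞(M) by P_{(b,θ,r)}(x, p) = r(x·p) + b·x + θ(x·Cp), where C is the matrix ((0,1),(−1,0)). Then P is a Lie algebra homomorphism from 𝔤 (with the bracket [(b,θ,r),(b',θ',r')] = (θ'b₂ − θb₂' + r'b₁ − rb₁', θb₁' − θ'b₁ + r'b₂ − rb₂', 0, 0)) to C^∞(M) with the canonical Poisson bracket: {P_A, P_B} = P_{[A,B]}. -/
import Mathlib


noncomputable section

/-- Elements `(b₁, b₂, θ, r)` of the Lie algebra `𝔤`, written as `((b₁, b₂), θ, r)`. -/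
abbrev g4 := (ℝ × ℝ) × ℝ × ℝ

/-- The Lie bracket `[(b,θ,r),(b',θ',r')] =
(θ'b₂ − θb₂' + r'b₁ − rb₁', θb₁' − θ'b₁ + r'b₂ − rb₂', 0, 0)` of `𝔤`. -/
def gbr (A B : g4) : g4 :=
  ((B.2.1 * A.1.2 - A.2.1 * B.1.2 + B.2.2 * A.1.1 - A.2.2 * B.1.1,
    A.2.1 * B.1.1 - B.2.1 * A.1.1 + B.2.2 * A.1.2 - A.2.2 * B.1.2), 0, 0)

/-- The canonical Poisson bracket `{f,g} = ∂ₓf·∂ₚg − ∂ₚf·∂ₓg` on `ℝ⁴ = ℝ²ₓ × ℝ²ₚ`,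
expressed via Fréchet derivatives in the coordinate directions. -/
def pois (f g : (ℝ × ℝ) × (ℝ × ℝ) → ℝ) (m : (ℝ × ℝ) × (ℝ × ℝ)) : ℝ :=
  fderiv ℝ f m ((1, 0), (0, 0)) * fderiv ℝ g m ((0, 0), (1, 0)) +
    fderiv ℝ f m ((0, 1), (0, 0)) * fderiv ℝ g m ((0, 0), (0, 1)) -
    fderiv ℝ f m ((0, 0), (1, 0)) * fderiv ℝ g m ((1, 0), (0, 0)) -
    fderiv ℝ f m ((0, 0), (0, 1)) * fderiv ℝ g m ((0, 1), (0, 0))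

/-- The momentum map `P_{(b,θ,r)}(x, p) = r(x·p) + b·x + θ(x·Cp)`, `C = ((0,1),(−1,0))`. -/
def P (A : g4) (m : (ℝ × ℝ) × (ℝ × ℝ)) : ℝ :=
  A.2.2 * (m.1.1 * m.2.1 + m.1.2 * m.2.2) + (A.1.1 * m.1.1 + A.1.2 * m.1.2) +
    A.2.1 * (m.1.1 * m.2.2 - m.1.2 * m.2.1)

/-- Explicit formula for the Fréchet derivative of `P A`. -/
lemma keyP (A : g4) (m v : (ℝ × ℝ) × (ℝ × ℝ)) :
    fderiv ℝ (P A) m v =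
      A.2.2 * (v.1.1 * m.2.1 + m.1.1 * v.2.1 + v.1.2 * m.2.2 + m.1.2 * v.2.2) +
      (A.1.1 * v.1.1 + A.1.2 * v.1.2) +
      A.2.1 * (v.1.1 * m.2.2 + m.1.1 * v.2.2 - v.1.2 * m.2.1 - m.1.2 * v.2.1) := by
  have hx1 : HasFDerivAt (fun m : (ℝ×ℝ)×(ℝ×ℝ) => m.1.1)
      ((ContinuousLinearMap.fst ℝ ℝ ℝ).comp (ContinuousLinearMap.fst ℝ (ℝ×ℝ) (ℝ×ℝ))) m :=
    (hasFDerivAt_fst).comp m hasFDerivAt_fst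
  have hx2 : HasFDerivAt (fun m : (ℝ×ℝ)×(ℝ×ℝ) => m.1.2)
      ((ContinuousLinearMap.snd ℝ ℝ ℝ).comp (ContinuousLinearMap.fst ℝ (ℝ×ℝ) (ℝ×ℝ))) m :=
    (hasFDerivAt_snd).comp m hasFDerivAt_fst
  have hp1 : HasFDerivAt (fun m : (ℝ×ℝ)×(ℝ×ℝ) => m.2.1)
      ((ContinuousLinearMap.fst ℝ ℝ ℝ).comp (ContinuousLinearMap.snd ℝ (ℝ×ℝ) (ℝ×ℝ))) m :=
    (hasFDerivAt_fst).comp m hasFDerivAt_snd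
  have hp2 : HasFDerivAt (fun m : (ℝ×ℝ)×(ℝ×ℝ) => m.2.2)
      ((ContinuousLinearMap.snd ℝ ℝ ℝ).comp (ContinuousLinearMap.snd ℝ (ℝ×ℝ) (ℝ×ℝ))) m :=
    (hasFDerivAt_snd).comp m hasFDerivAt_snd
  have h : HasFDerivAt (P A) _ m :=
    ((((hx1.mul hp1).add (hx2.mul hp2)).const_mul A.2.2).add
      ((hx1.const_mul A.1.1).add (hx2.const_mul A.1.2))).add
      (((hx1.mul hp2).sub (hx2.mul hp1)).const_mul A.2.1)
  rw [h.fderiv]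
  simp [ContinuousLinearMap.comp_apply]
  ring

/-- `P : 𝔤 → C^∞(M)` is a Lie algebra homomorphism from `𝔤` to the smooth functions on
`M = (ℝ² \ {0}) × ℝ²` with the canonical Poisson bracket: `{P_A, P_B} = P_{[A,B]}`. -/
theorem stmt9 (A B : g4) (m : (ℝ × ℝ) × (ℝ × ℝ)) (hm : m.1 ≠ 0) :
    pois (P A) (P B) m = P (gbr A B) m := by
  simp only [pois, keyP, gbr, P]
  ring
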